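/- arXiv:2311.16188 — 2 statements merged into one kernel-verified Lean document; each statement's English description precedes it below -/
import Mathlib

section
/- Let n ≥ 4 and let L_n be the line graph on vertices {1, ..., n}. Let a_1 < a_2 < b_1 < b_2 be vertices of L_n with a_2 and b_1 adjacent in L_n (i.e., b_1 = a_2 + 1). Then the graph on vertex set {a_1, a_2, b_1, b_2} whose only edges are {a_1, a_2} and {b_1, b_2} (two Bell pairs) is not a vertex-minor of L_n. -/
/-!
Cut the vertices at a threshold `t` into `P = {x ≤ t}` and `Q = {x > t}`, with ports `t` and
`t + 1`; in `L_n` the only edge across is `t (t+1)`. These properties of every such cut survive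
local complementation and vertex deletion: the edges across form a complete bipartite graph
between the crossing vertices `T ⊆ P` and `S ⊆ Q`; the port `t` lies in `T` or has neighbourhood
exactly `T`, and if `t ∈ T` is adjacent to another vertex of `T`, its neighbourhood in `P` is
`T \ {t}` (symmetrically for `t + 1` and `S`); if no edge crosses, one of the ports is isolated.
Preserving the port conditions under local complementation uses the complete bipartite condition
at the neighbouring thresholds `t - 1` and `t + 1`. Two Bell pairs `a₁a₂` and `(a₂+1)b₂` violate
the last condition at `t = a₂`.
-/

/-- A finite simple graph with an explicit vertex set `verts` inside an ambient type `V`. -/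
structure FGraph (V : Type*) where
  verts : Finset V
  Adj : V → V → Prop
  symm : ∀ x y, Adj x y → Adj y x
  loopless : ∀ x, ¬ Adj x x
  mem_of_adj : ∀ x y, Adj x y → x ∈ verts ∧ y ∈ verts

variable {V : Type*}

/-- Local complementation `τ_a(G)`: toggle every edge between distinct neighbors of `a`. -/
def FGraph.lc (G : FGraph V) (a : V) : FGraph V where
  verts := G.verts
  Adj x y := (G.Adj x y ∧ ¬(x ≠ y ∧ G.Adj a x ∧ G.Adj a y)) ∨
             ((x ≠ y ∧ G.Adj a x ∧ G.Adj a y) ∧ ¬ G.Adj x y)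
  symm := by
    rintro x y (⟨h1, h2⟩ | ⟨⟨hne, hx, hy⟩, h2⟩)
    · exact Or.inl ⟨G.symm _ _ h1, fun h => h2 ⟨h.1.symm, h.2.2, h.2.1⟩⟩
    · exact Or.inr ⟨⟨hne.symm, hy, hx⟩, fun h => h2 (G.symm _ _ h)⟩
  loopless := by
    rintro x (⟨h1, _⟩ | ⟨⟨hne, _, _⟩, _⟩)
    · exact G.loopless x h1
    · exact hne rfl
  mem_of_adj := by
    rintro x y (⟨h1, _⟩ | ⟨⟨hne, hx, hy⟩, _⟩)
    · exact G.mem_of_adj _ _ h1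
    · exact ⟨(G.mem_of_adj _ _ hx).2, (G.mem_of_adj _ _ hy).2⟩

/-- Vertex deletion `G \ v`. -/
def FGraph.delete [DecidableEq V] (G : FGraph V) (v : V) : FGraph V where
  verts := G.verts.erase v
  Adj x y := G.Adj x y ∧ x ≠ v ∧ y ≠ v
  symm := by rintro x y ⟨h, hx, hy⟩; exact ⟨G.symm _ _ h, hy, hx⟩
  loopless := by rintro x ⟨h, _⟩; exact G.loopless x h
  mem_of_adj := by
    rintro x y ⟨h, hx, hy⟩
    exact ⟨Finset.mem_erase.2 ⟨hx, (G.mem_of_adj _ _ h).1⟩,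
           Finset.mem_erase.2 ⟨hy, (G.mem_of_adj _ _ h).2⟩⟩

/-- One step: a local complementation or a vertex deletion. -/
def FGraph.Step [DecidableEq V] (G G' : FGraph V) : Prop :=
  (∃ a, G' = G.lc a) ∨ (∃ v, G' = G.delete v)

/-- `H` is a vertex-minor of `G` (written `H < G`): `H` is obtained from `G` by a finite
sequence of local complementations and vertex deletions. -/
def IsVertexMinor [DecidableEq V] (H G : FGraph V) : Prop :=
  Relation.ReflTransGen FGraph.Step G H

/-- The line graph `L_n` on vertices `{1, ..., n}` with edges `{i, i+1}`. -/
def lineGraph (n : ℕ) : FGraph ℕ where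
  verts := Finset.Icc 1 n
  Adj x y := x ∈ Finset.Icc 1 n ∧ y ∈ Finset.Icc 1 n ∧ (y = x + 1 ∨ x = y + 1)
  symm := by rintro x y ⟨hx, hy, hc⟩; exact ⟨hy, hx, hc.symm⟩
  loopless := by rintro x ⟨_, _, h | h⟩ <;> omega
  mem_of_adj := by rintro x y ⟨hx, hy, _⟩; exact ⟨hx, hy⟩

/-- The ring (cycle) graph `R_n` on vertices `{1, ..., n}`. -/
def ringGraph (n : ℕ) : FGraph ℕ where
  verts := Finset.Icc 1 n
  Adj x y := x ≠ y ∧ x ∈ Finset.Icc 1 n ∧ y ∈ Finset.Icc 1 n ∧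
    (y = x + 1 ∨ x = y + 1 ∨ (x = n ∧ y = 1) ∨ (x = 1 ∧ y = n))
  symm := by rintro x y ⟨hne, hx, hy, hc⟩; exact ⟨hne.symm, hy, hx, by tauto⟩
  loopless := by rintro x ⟨hne, _⟩; exact hne rfl
  mem_of_adj := by rintro x y ⟨_, hx, hy, _⟩; exact ⟨hx, hy⟩

/-- The successor of position `i` along the cycle `1, 2, ..., n, 1`. -/
def cnext (n i : ℕ) : ℕ := if i = n then 1 else i + 1

/-- A Bell pair on `{a1, a2}` together with the isolated vertex `b`. -/
def bell1 {V : Type*} [DecidableEq V] (a1 a2 b : V) : FGraph V where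
  verts := {a1, a2, b}
  Adj x y := x ≠ y ∧ ((x = a1 ∧ y = a2) ∨ (x = a2 ∧ y = a1))
  symm := by rintro x y ⟨hne, hc⟩; exact ⟨hne.symm, by tauto⟩
  loopless := by rintro x ⟨hne, _⟩; exact hne rfl
  mem_of_adj := by
    rintro x y ⟨_, (⟨hx, hy⟩ | ⟨hx, hy⟩)⟩ <;> subst hx <;> subst hy <;>
      simp [Finset.mem_insert]

/-- Two Bell pairs, on `{a1, a2}` and on `{b1, b2}`. -/
def bell2 {V : Type*} [DecidableEq V] (a1 a2 b1 b2 : V) : FGraph V where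
  verts := {a1, a2, b1, b2}
  Adj x y := x ≠ y ∧ ((x = a1 ∧ y = a2) ∨ (x = a2 ∧ y = a1) ∨
                      (x = b1 ∧ y = b2) ∨ (x = b2 ∧ y = b1))
  symm := by rintro x y ⟨hne, hc⟩; exact ⟨hne.symm, by tauto⟩
  loopless := by rintro x ⟨hne, _⟩; exact hne rfl
  mem_of_adj := by
    rintro x y ⟨_, (⟨hx, hy⟩ | ⟨hx, hy⟩ | ⟨hx, hy⟩ | ⟨hx, hy⟩)⟩ <;> subst hx <;> subst hy <;>
      simp [Finset.mem_insert]

lemma ne_of_disjoint_of_apply {P Q : V → Prop} {x y : V} (h : Disjoint P Q) (hx : P x) (hy : Q y) :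
    x ≠ y := by
  rintro rfl
  exact Prop.disjoint_iff.1 (Pi.disjoint_iff.1 h x) ⟨hx, hy⟩

lemma or_of_isCompl_of_apply {P Q : V → Prop} (h : IsCompl P Q) (x : V) : P x ∨ Q x :=
  Prop.codisjoint_iff.1 (Pi.codisjoint_iff.1 h.codisjoint x)

namespace FGraph

section Cut

def CrossAdj (G : FGraph V) (P Q : V → Prop) (x y : V) : Prop := G.Adj x y ∧ P x ∧ Q y

def IsCrossing (G : FGraph V) (P Q : V → Prop) (x : V) : Prop := ∃ y, G.CrossAdj P Q x y

def HasCrossEdge (G : FGraph V) (P Q : V → Prop) : Prop := ∃ x y, G.CrossAdj P Q x y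

def CrossComplete (G : FGraph V) (P Q : V → Prop) : Prop :=
  ∀ ⦃x y x' y'⦄, G.CrossAdj P Q x y → G.CrossAdj P Q x' y' → G.Adj x y'

def CrossingOrNbhdEqCrossing (G : FGraph V) (P Q : V → Prop) (p : V) : Prop :=
  G.HasCrossEdge P Q → p ∈ G.verts →
    G.IsCrossing P Q p ∨ ∀ z, G.Adj p z ↔ G.IsCrossing P Q z

def IsolatedOfNoCrossEdge (G : FGraph V) (P Q : V → Prop) (p q : V) : Prop :=
  ¬ G.HasCrossEdge P Q → p ∈ G.verts → q ∈ G.verts →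
    (∀ z, ¬ G.Adj p z) ∨ (∀ z, ¬ G.Adj q z)

def NbhdEqCrossingOfAdjCrossing (G : FGraph V) (P Q : V → Prop) (p : V) : Prop :=
  G.IsCrossing P Q p → (∃ w, G.Adj p w ∧ G.IsCrossing P Q w) →
    ∀ z, P z → (G.Adj p z ↔ G.IsCrossing P Q z ∧ z ≠ p)

structure CutInvariant (G : FGraph V) (P Q : V → Prop) (p q : V) : Prop where
  crossComplete : G.CrossComplete P Q
  crossingOrNbhd_left : G.CrossingOrNbhdEqCrossing P Q p
  crossingOrNbhd_right : G.CrossingOrNbhdEqCrossing Q P q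
  isolated : G.IsolatedOfNoCrossEdge P Q p q
  nbhd_left : G.NbhdEqCrossingOfAdjCrossing P Q p
  nbhd_right : G.NbhdEqCrossingOfAdjCrossing Q P q

variable {G : FGraph V} {P Q P' Q' : V → Prop} {a p q v w x y z : V}

lemma adj_comm : G.Adj x y ↔ G.Adj y x := ⟨G.symm _ _, G.symm _ _⟩

lemma CrossAdj.swap (h : G.CrossAdj P Q x y) : G.CrossAdj Q P y x :=
  ⟨G.symm _ _ h.1, h.2.2, h.2.1⟩

lemma IsCrossing.left (h : G.IsCrossing P Q x) : P x := h.elim fun _ hxy => hxy.2.1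

lemma HasCrossEdge.swap (h : G.HasCrossEdge P Q) : G.HasCrossEdge Q P :=
  let ⟨x, y, hxy⟩ := h; ⟨y, x, hxy.swap⟩

lemma CrossComplete.swap (h : G.CrossComplete P Q) : G.CrossComplete Q P :=
  fun _ _ _ _ hxy hx'y' => G.symm _ _ (h hx'y'.swap hxy.swap)

lemma CrossComplete.mono (h : G.CrossComplete P' Q') (hP : ∀ x, P x → P' x)
    (hQ : ∀ y, Q y → Q' y) : G.CrossComplete P Q :=
  fun _ _ _ _ hxy hx'y' =>
    h ⟨hxy.1, hP _ hxy.2.1, hQ _ hxy.2.2⟩ ⟨hx'y'.1, hP _ hx'y'.2.1, hQ _ hx'y'.2.2⟩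

lemma CrossComplete.adj_iff (h : G.CrossComplete P Q) (hx : P x) (hy : Q y) :
    G.Adj x y ↔ G.IsCrossing P Q x ∧ G.IsCrossing Q P y :=
  ⟨fun hxy => ⟨⟨y, hxy, hx, hy⟩, ⟨x, G.symm _ _ hxy, hy, hx⟩⟩,
    fun ⟨⟨_, hxy'⟩, ⟨_, hx'y⟩⟩ => h hxy' hx'y.swap⟩

lemma IsolatedOfNoCrossEdge.swap (h : G.IsolatedOfNoCrossEdge P Q p q) :
    G.IsolatedOfNoCrossEdge Q P q p :=
  fun hncr hq hp => (h (fun hcr => hncr hcr.swap) hp hq).symm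

lemma CutInvariant.swap (h : G.CutInvariant P Q p q) : G.CutInvariant Q P q p :=
  ⟨h.crossComplete.swap, h.crossingOrNbhd_right, h.crossingOrNbhd_left, h.isolated.swap,
    h.nbhd_right, h.nbhd_left⟩

section Delete

variable [DecidableEq V]

lemma delete_adj : (G.delete v).Adj x y ↔ G.Adj x y ∧ x ≠ v ∧ y ≠ v := Iff.rfl

lemma delete_crossAdj : (G.delete v).CrossAdj P Q x y ↔ G.CrossAdj P Q x y ∧ x ≠ v ∧ y ≠ v := by
  unfold CrossAdj
  rw [delete_adj]
  tauto

lemma CrossComplete.delete_isCrossing (h : G.CrossComplete P Q)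
    (hcr : (G.delete v).HasCrossEdge P Q) (z : V) :
    (G.delete v).IsCrossing P Q z ↔ G.IsCrossing P Q z ∧ z ≠ v := by
  obtain ⟨x₀, y₀, h₀⟩ := hcr
  rw [delete_crossAdj] at h₀
  constructor
  · rintro ⟨y, hy⟩
    rw [delete_crossAdj] at hy
    exact ⟨⟨y, hy.1⟩, hy.2.1⟩
  · rintro ⟨⟨y, hy⟩, hzv⟩
    exact ⟨y₀, delete_crossAdj.2 ⟨⟨h hy h₀.1, hy.2.1, h₀.1.2.2⟩, hzv, h₀.2.2⟩⟩

lemma CrossComplete.delete (h : G.CrossComplete P Q) : (G.delete v).CrossComplete P Q := by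
  intro x y x' y' hxy hx'y'
  rw [delete_crossAdj] at hxy hx'y'
  exact delete_adj.2 ⟨h hxy.1 hx'y'.1, hxy.2.1, hx'y'.2.2⟩

lemma CrossingOrNbhdEqCrossing.delete (hcomp : G.CrossComplete P Q)
    (h : G.CrossingOrNbhdEqCrossing P Q p) : (G.delete v).CrossingOrNbhdEqCrossing P Q p := by
  intro hcr hp
  obtain ⟨hpv, hp⟩ := Finset.mem_erase.1 hp
  have hT := hcomp.delete_isCrossing hcr
  obtain ⟨x₀, y₀, h₀⟩ := hcr
  rcases h ⟨x₀, y₀, (delete_crossAdj.1 h₀).1⟩ hp with hpT | hN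
  · exact Or.inl ((hT p).2 ⟨hpT, hpv⟩)
  · right
    intro z
    rw [hT z, delete_adj, hN z]
    tauto

lemma CrossingOrNbhdEqCrossing.forall_not_delete_adj (hdisj : Disjoint P Q)
    (h : G.CrossingOrNbhdEqCrossing P Q p) (hp : p ∈ (G.delete v).verts)
    (hv : G.CrossAdj P Q v y) (hall : ∀ x y, G.CrossAdj P Q x y → x = v ∨ y = v) :
    ∀ z, ¬ (G.delete v).Adj p z := by
  obtain ⟨hpv, hp⟩ := Finset.mem_erase.1 hp
  have hT : ∀ u, G.IsCrossing P Q u → u = v := by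
    rintro u ⟨s, hs⟩
    exact (hall u s hs).resolve_right
      (by rintro rfl; exact ne_of_disjoint_of_apply hdisj hv.2.1 hs.2.2 rfl)
  rcases h ⟨v, y, hv⟩ hp with hpT | hN
  · exact absurd (hT p hpT) hpv
  · exact fun z hz => hz.2.2 (hT z ((hN z).1 hz.1))

lemma IsolatedOfNoCrossEdge.delete (hdisj : Disjoint P Q)
    (hp : G.CrossingOrNbhdEqCrossing P Q p) (hq : G.CrossingOrNbhdEqCrossing Q P q)
    (h : G.IsolatedOfNoCrossEdge P Q p q) : (G.delete v).IsolatedOfNoCrossEdge P Q p q := by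
  intro hncr hpv hqv
  by_cases hcr : G.HasCrossEdge P Q
  · obtain ⟨x, y, hxy⟩ := hcr
    have hall : ∀ x y, G.CrossAdj P Q x y → x = v ∨ y = v := fun x y hxy => by
      by_contra! hne
      exact hncr ⟨x, y, delete_crossAdj.2 ⟨hxy, hne⟩⟩
    rcases hall x y hxy with rfl | rfl
    · exact Or.inl (hp.forall_not_delete_adj hdisj hpv hxy hall)
    · exact Or.inr (hq.forall_not_delete_adj hdisj.symm hqv hxy.swap
        fun x y hxy => (hall y x hxy.swap).symm)
  · exact (h hcr (Finset.mem_of_mem_erase hpv) (Finset.mem_of_mem_erase hqv)).imp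
      (fun hN z hz => hN z hz.1) (fun hN z hz => hN z hz.1)

lemma NbhdEqCrossingOfAdjCrossing.delete (hcomp : G.CrossComplete P Q)
    (h : G.NbhdEqCrossingOfAdjCrossing P Q p) : (G.delete v).NbhdEqCrossingOfAdjCrossing P Q p := by
  rintro hpT ⟨w, hpw, hwT⟩ z hz
  obtain ⟨y, hpy⟩ := id hpT
  have hT := hcomp.delete_isCrossing ⟨p, y, hpy⟩
  rw [hT] at hpT hwT
  rw [delete_adj, hT, h hpT.1 ⟨w, hpw.1, hwT.1⟩ z hz]
  have := hpT.2
  tauto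

lemma CutInvariant.delete (hdisj : Disjoint P Q) (h : G.CutInvariant P Q p q) (v : V) :
    (G.delete v).CutInvariant P Q p q :=
  ⟨h.crossComplete.delete, h.crossingOrNbhd_left.delete h.crossComplete,
    h.crossingOrNbhd_right.delete h.crossComplete.swap,
    h.isolated.delete hdisj h.crossingOrNbhd_left h.crossingOrNbhd_right,
    h.nbhd_left.delete h.crossComplete, h.nbhd_right.delete h.crossComplete.swap⟩

end Delete

lemma lc_adj (hne : x ≠ y) :
    (G.lc a).Adj x y ↔
      G.Adj x y ∧ ¬(G.Adj a x ∧ G.Adj a y) ∨ ¬ G.Adj x y ∧ G.Adj a x ∧ G.Adj a y := by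
  change (G.Adj x y ∧ ¬(x ≠ y ∧ _)) ∨ ((x ≠ y ∧ _) ∧ _) ↔ _
  tauto

lemma lc_adj_of_not_adj (hap : ¬ G.Adj a p) : (G.lc a).Adj p z ↔ G.Adj p z := by
  change (G.Adj p z ∧ ¬(p ≠ z ∧ G.Adj a p ∧ _)) ∨ ((p ≠ z ∧ G.Adj a p ∧ _) ∧ _) ↔ _
  tauto

lemma HasCrossEdge.lc (hPQ : IsCompl P Q) (h : G.HasCrossEdge P Q) (a : V) :
    (G.lc a).HasCrossEdge P Q := by
  obtain ⟨x, y, hxy, hx, hy⟩ := h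
  by_cases hxy' : (G.lc a).Adj x y
  · exact ⟨x, y, hxy', hx, hy⟩
  have hax : G.Adj a x ∧ G.Adj a y := by
    rw [lc_adj (ne_of_disjoint_of_apply hPQ.disjoint hx hy)] at hxy'
    tauto
  rcases or_of_isCompl_of_apply hPQ a with ha | ha
  · exact ⟨a, y, (lc_adj_of_not_adj (G.loopless a)).2 hax.2, ha, hy⟩
  · exact ⟨x, a, (G.lc a).symm _ _ ((lc_adj_of_not_adj (G.loopless a)).2 hax.1), hx, ha⟩

lemma lc_crossAdj_of_not_isCrossing (hPQ : IsCompl P Q) (haP : ¬ G.IsCrossing P Q a)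
    (haQ : ¬ G.IsCrossing Q P a) : (G.lc a).CrossAdj P Q x y ↔ G.CrossAdj P Q x y := by
  refine and_congr_left fun ⟨hx, hy⟩ => ?_
  have hxy : ¬(G.Adj a x ∧ G.Adj a y) := by
    rintro ⟨hax, hay⟩
    rcases or_of_isCompl_of_apply hPQ a with ha | ha
    · exact haP ⟨y, hay, ha, hy⟩
    · exact haQ ⟨x, hax, ha, hx⟩
  rw [lc_adj (ne_of_disjoint_of_apply hPQ.disjoint hx hy)]
  tauto

lemma lc_isCrossing_of_not_isCrossing (hPQ : IsCompl P Q) (haP : ¬ G.IsCrossing P Q a)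
    (haQ : ¬ G.IsCrossing Q P a) (z : V) :
    (G.lc a).IsCrossing P Q z ↔ G.IsCrossing P Q z :=
  exists_congr fun _ => lc_crossAdj_of_not_isCrossing hPQ haP haQ

lemma lc_adj_of_isCrossing (hdisj : Disjoint P Q) (hcomp : G.CrossComplete P Q)
    (ha : G.IsCrossing P Q a) (hx : P x) (hy : Q y) :
    (G.lc a).Adj x y ↔ ¬(G.IsCrossing P Q x ↔ G.Adj a x) ∧ G.IsCrossing Q P y := by
  rw [lc_adj (ne_of_disjoint_of_apply hdisj hx hy), hcomp.adj_iff hx hy, hcomp.adj_iff ha.left hy]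
  tauto

lemma lc_isCrossing_of_isCrossing (hdisj : Disjoint P Q) (hcomp : G.CrossComplete P Q)
    (ha : G.IsCrossing P Q a) (z : V) :
    (G.lc a).IsCrossing P Q z ↔ P z ∧ ¬(G.IsCrossing P Q z ↔ G.Adj a z) := by
  constructor
  · rintro ⟨y, hzy, hz, hy⟩
    exact ⟨hz, ((lc_adj_of_isCrossing hdisj hcomp ha hz hy).1 hzy).1⟩
  · rintro ⟨hz, hne⟩
    obtain ⟨y, hay⟩ := id ha
    exact ⟨y, (lc_adj_of_isCrossing hdisj hcomp ha hz hay.2.2).2 ⟨hne, a, hay.swap⟩, hz, hay.2.2⟩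

lemma lc_isCrossing_of_isCrossing_swap (hdisj : Disjoint P Q) (hcomp : G.CrossComplete P Q)
    (ha : G.IsCrossing Q P a) (z : V) :
    (G.lc a).IsCrossing P Q z ↔ G.IsCrossing P Q z := by
  have hlc : ∀ {y}, Q y → P z → ((G.lc a).Adj y z ↔
      ¬(G.IsCrossing Q P y ↔ G.Adj a y) ∧ G.IsCrossing P Q z) :=
    lc_adj_of_isCrossing hdisj.symm hcomp.swap ha
  constructor
  · rintro ⟨y, hzy, hz, hy⟩
    exact ((hlc hy hz).1 ((G.lc a).symm _ _ hzy)).2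
  · intro hz
    refine ⟨a, (G.lc a).symm _ _ ((hlc ha.left hz.left).2 ⟨?_, hz⟩), hz.left, ha.left⟩
    simp only [ha, G.loopless a, iff_false, not_true_eq_false, not_false_eq_true]

lemma CrossComplete.lc_of_isCrossing (hcomp : G.CrossComplete P Q) (hdisj : Disjoint P Q)
    (ha : G.IsCrossing P Q a) : (G.lc a).CrossComplete P Q := by
  intro x y x' y' hxy hx'y'
  have hlc := fun {x y} => lc_adj_of_isCrossing (x := x) (y := y) hdisj hcomp ha
  exact (hlc hxy.2.1 hx'y'.2.2).2
    ⟨((hlc hxy.2.1 hxy.2.2).1 hxy.1).1, ((hlc hx'y'.2.1 hx'y'.2.2).1 hx'y'.1).2⟩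

lemma CrossComplete.lc (hPQ : IsCompl P Q) (h : G.CrossComplete P Q) (a : V) :
    (G.lc a).CrossComplete P Q := by
  by_cases haP : G.IsCrossing P Q a
  · exact h.lc_of_isCrossing hPQ.disjoint haP
  by_cases haQ : G.IsCrossing Q P a
  · exact (h.swap.lc_of_isCrossing hPQ.symm.disjoint haQ).swap
  intro x y x' y' hxy hx'y'
  rw [lc_crossAdj_of_not_isCrossing hPQ haP haQ] at hxy hx'y'
  exact ((lc_crossAdj_of_not_isCrossing hPQ haP haQ).2 ⟨h hxy hx'y', hxy.2.1, hx'y'.2.2⟩).1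

lemma IsolatedOfNoCrossEdge.lc (hPQ : IsCompl P Q) (h : G.IsolatedOfNoCrossEdge P Q p q)
    (a : V) : (G.lc a).IsolatedOfNoCrossEdge P Q p q := by
  intro hncr hp hq
  have hncr : ¬ G.HasCrossEdge P Q := fun hcr => hncr (hcr.lc hPQ a)
  have hiso : ∀ {u}, (∀ z, ¬ G.Adj u z) → ∀ z, ¬ (G.lc a).Adj u z := fun hN z => by
    rw [lc_adj_of_not_adj (fun h => hN a (G.symm _ _ h))]
    exact hN z
  exact (h hncr hp hq).imp hiso hiso

lemma CrossingOrNbhdEqCrossing.lc_of_not_isCrossing (hPQ : IsCompl P Q)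
    (haP : ¬ G.IsCrossing P Q a) (haQ : ¬ G.IsCrossing Q P a)
    (h : G.CrossingOrNbhdEqCrossing P Q p) : (G.lc a).CrossingOrNbhdEqCrossing P Q p := by
  rintro ⟨x, y, hxy⟩ hp
  have hT := lc_isCrossing_of_not_isCrossing hPQ haP haQ
  rcases h ⟨x, y, (lc_crossAdj_of_not_isCrossing hPQ haP haQ).1 hxy⟩ hp with hpT | hN
  · exact Or.inl ((hT p).2 hpT)
  · have hap : ¬ G.Adj a p := fun hap => haP ((hN a).1 (G.symm _ _ hap))
    exact Or.inr fun z => by rw [lc_adj_of_not_adj hap, hN z, hT z]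

lemma CrossingOrNbhdEqCrossing.lc_of_isCrossing_swap (hdisj : Disjoint P Q) (hp : P p)
    (hcomp : G.CrossComplete P Q) (ha : G.IsCrossing Q P a)
    (h : G.CrossingOrNbhdEqCrossing P Q p) : (G.lc a).CrossingOrNbhdEqCrossing P Q p := by
  intro _ hpV
  have hT := lc_isCrossing_of_isCrossing_swap hdisj hcomp ha
  obtain ⟨x, hax⟩ := id ha
  rcases h ⟨x, a, hax.swap⟩ hpV with hpT | hN
  · exact Or.inl ((hT p).2 hpT)
  · have hap : ¬ G.Adj a p := fun hap =>
      G.loopless p ((hN p).2 ⟨a, G.symm _ _ hap, hp, ha.left⟩)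
    exact Or.inr fun z => by rw [lc_adj_of_not_adj hap, hN z, hT z]

lemma CrossingOrNbhdEqCrossing.lc_of_isCrossing (hPQ : IsCompl P Q) (hp : P p)
    (hcomp : G.CrossComplete P Q) (hnbhd : G.NbhdEqCrossingOfAdjCrossing P Q p)
    (ha : G.IsCrossing P Q a) (h : G.CrossingOrNbhdEqCrossing P Q p) :
    (G.lc a).CrossingOrNbhdEqCrossing P Q p := by
  intro _ hpV
  have hT := lc_isCrossing_of_isCrossing hPQ.disjoint hcomp ha
  obtain ⟨y, hay⟩ := id ha
  rcases h ⟨a, y, hay⟩ hpV with hpT | hN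
  · by_cases hap : G.Adj a p
    · right
      have hN := hnbhd hpT ⟨a, G.symm _ _ hap, ha⟩
      intro z
      rw [hT z]
      rcases or_of_isCompl_of_apply hPQ z with hz | hz
      · obtain rfl | hzp := eq_or_ne z p
        · exact iff_of_false ((G.lc a).loopless z) (by tauto)
        · rw [lc_adj hzp.symm, hN z hz]
          tauto
      · refine iff_of_false (fun hpz => ?_)
          (fun hz' => ne_of_disjoint_of_apply hPQ.disjoint hz'.1 hz rfl)
        exact ((lc_adj_of_isCrossing hPQ.disjoint hcomp ha hp hz).1 hpz).1 (iff_of_true hpT hap)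
    · exact Or.inl ((hT p).2 ⟨hp, by tauto⟩)
  · have hap : G.Adj a p := G.symm _ _ ((hN a).2 ha)
    have hpT : ¬ G.IsCrossing P Q p := fun hpT => G.loopless p ((hN p).2 hpT)
    exact Or.inl ((hT p).2 ⟨hp, by tauto⟩)

lemma CrossingOrNbhdEqCrossing.lc (hPQ : IsCompl P Q) (hp : P p) (hcomp : G.CrossComplete P Q)
    (hnbhd : G.NbhdEqCrossingOfAdjCrossing P Q p) (h : G.CrossingOrNbhdEqCrossing P Q p) (a : V) :
    (G.lc a).CrossingOrNbhdEqCrossing P Q p := by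
  by_cases haP : G.IsCrossing P Q a
  · exact h.lc_of_isCrossing hPQ hp hcomp hnbhd haP
  by_cases haQ : G.IsCrossing Q P a
  · exact h.lc_of_isCrossing_swap hPQ.disjoint hp hcomp haQ
  exact h.lc_of_not_isCrossing hPQ haP haQ

/-- Both `x p` and `w s` cross the cut `(P \ {p}, Q ∪ {p})`. -/
lemma CrossComplete.isCrossing_of_adj_port
    (h : G.CrossComplete (fun x => P x ∧ x ≠ p) (fun x => Q x ∨ x = p))
    (hx : P x) (hxp : G.Adj x p) (hw : G.IsCrossing P Q w) (hwp : w ≠ p) :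
    G.IsCrossing P Q x := by
  obtain ⟨s, hws, hw, hs⟩ := hw
  have hxp' : x ≠ p := fun h => G.loopless p (h ▸ hxp)
  exact ⟨s, h ⟨hxp, ⟨hx, hxp'⟩, Or.inr rfl⟩ ⟨hws, ⟨hw, hwp⟩, Or.inl hs⟩, hx, hs⟩

lemma NbhdEqCrossingOfAdjCrossing.lc_of_not_isCrossing (hPQ : IsCompl P Q) (hp : P p)
    (hcomp' : G.CrossComplete (fun x => P x ∧ x ≠ p) (fun x => Q x ∨ x = p))
    (haP : ¬ G.IsCrossing P Q a) (haQ : ¬ G.IsCrossing Q P a)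
    (h : G.NbhdEqCrossingOfAdjCrossing P Q p) : (G.lc a).NbhdEqCrossingOfAdjCrossing P Q p := by
  have hT := lc_isCrossing_of_not_isCrossing hPQ haP haQ
  rintro hpT ⟨w, hpw, hwT⟩
  rw [hT] at hpT hwT
  by_cases hap : G.Adj a p
  · have ha : P a := (or_of_isCompl_of_apply hPQ a).resolve_right fun ha => haQ ⟨p, hap, ha, hp⟩
    have hwp : w ≠ p := fun h => (G.lc a).loopless p (h ▸ hpw)
    exact (haP (hcomp'.isCrossing_of_adj_port ha hap hwT hwp)).elim
  · rw [lc_adj_of_not_adj hap] at hpw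
    intro z hz
    rw [lc_adj_of_not_adj hap, hT z]
    exact h hpT ⟨w, hpw, hwT⟩ z hz

lemma NbhdEqCrossingOfAdjCrossing.lc_of_isCrossing_swap (hdisj : Disjoint P Q)
    (hcomp : G.CrossComplete P Q)
    (hcomp' : G.CrossComplete (fun x => P x ∧ x ≠ p) (fun x => Q x ∨ x = p))
    (ha : G.IsCrossing Q P a) (h : G.NbhdEqCrossingOfAdjCrossing P Q p) :
    (G.lc a).NbhdEqCrossingOfAdjCrossing P Q p := by
  have hT := lc_isCrossing_of_isCrossing_swap hdisj hcomp ha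
  have haT : ∀ {x}, P x → (G.Adj a x ↔ G.IsCrossing P Q x) := fun hx => by
    rw [← G.adj_comm, hcomp.adj_iff hx ha.left, and_iff_left ha]
  rintro hpT ⟨w, hpw, hwT⟩ z hz
  rw [hT] at hpT hwT ⊢
  have hwp : w ≠ p := fun h => (G.lc a).loopless p (h ▸ hpw)
  have hpw' : ¬ G.Adj p w := by
    rw [lc_adj hwp.symm, haT hpT.left, haT hwT.left] at hpw
    tauto
  have hpz : ¬ G.Adj p z := fun hpz => hpw'
    ((h hpT ⟨z, hpz, hcomp'.isCrossing_of_adj_port hz (G.symm _ _ hpz) hwT hwp⟩ w hwT.left).2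
      ⟨hwT, hwp⟩)
  obtain rfl | hzp := eq_or_ne z p
  · exact iff_of_false ((G.lc a).loopless z) (fun h => h.2 rfl)
  rw [lc_adj hzp.symm, haT hpT.left, haT hz]
  tauto

lemma NbhdEqCrossingOfAdjCrossing.lc_of_isCrossing (hdisj : Disjoint P Q)
    (hcomp : G.CrossComplete P Q)
    (hcomp' : G.CrossComplete (fun x => P x ∧ x ≠ p) (fun x => Q x ∨ x = p))
    (hport : G.CrossingOrNbhdEqCrossing P Q p) (ha : G.IsCrossing P Q a)
    (h : G.NbhdEqCrossingOfAdjCrossing P Q p) : (G.lc a).NbhdEqCrossingOfAdjCrossing P Q p := by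
  have hT := lc_isCrossing_of_isCrossing hdisj hcomp ha
  rintro hpT' ⟨w, hpw, hwT'⟩ z hz
  have hwp : w ≠ p := fun h => (G.lc a).loopless p (h ▸ hpw)
  rw [hT] at hpT' hwT' ⊢
  by_cases hpT : G.IsCrossing P Q p
  · have hap : ¬ G.Adj a p := by tauto
    rw [lc_adj_of_not_adj hap] at hpw ⊢
    obtain rfl | hap' := eq_or_ne a p
    · have hwT : ¬ G.IsCrossing P Q w := by tauto
      have hTa : ∀ u, G.IsCrossing P Q u → u = a := fun u hu => by_contra fun hua =>
        hwT (hcomp'.isCrossing_of_adj_port hwT'.1 (G.symm _ _ hpw) hu hua)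
      obtain rfl | hza := eq_or_ne z a
      · exact iff_of_false (G.loopless z) (fun h => h.2 rfl)
      · have := hTa z
        tauto
    · exfalso
      by_cases hwT : G.IsCrossing P Q w
      · exact hap (G.symm _ _ ((h hpT ⟨w, hpw, hwT⟩ a ha.left).2 ⟨ha, hap'⟩))
      · exact hwT (hcomp'.isCrossing_of_adj_port hwT'.1 (G.symm _ _ hpw) ha hap')
  · have hap : G.Adj a p := by tauto
    obtain ⟨y, hay⟩ := id ha
    have hN := (hport ⟨a, y, hay⟩ (G.mem_of_adj _ _ hap).2).resolve_left hpT
    obtain rfl | hzp := eq_or_ne z p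
    · exact iff_of_false ((G.lc a).loopless z) (fun h => h.2 rfl)
    · rw [lc_adj hzp.symm, hN z]
      tauto

lemma NbhdEqCrossingOfAdjCrossing.lc (hPQ : IsCompl P Q) (hp : P p) (hcomp : G.CrossComplete P Q)
    (hcomp' : G.CrossComplete (fun x => P x ∧ x ≠ p) (fun x => Q x ∨ x = p))
    (hport : G.CrossingOrNbhdEqCrossing P Q p) (h : G.NbhdEqCrossingOfAdjCrossing P Q p) (a : V) :
    (G.lc a).NbhdEqCrossingOfAdjCrossing P Q p := by
  by_cases haP : G.IsCrossing P Q a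
  · exact h.lc_of_isCrossing hPQ.disjoint hcomp hcomp' hport haP
  by_cases haQ : G.IsCrossing Q P a
  · exact h.lc_of_isCrossing_swap hPQ.disjoint hcomp hcomp' haQ
  exact h.lc_of_not_isCrossing hPQ hp hcomp' haP haQ

lemma CutInvariant.lc (hPQ : IsCompl P Q) (hp : P p) (hq : Q q) (h : G.CutInvariant P Q p q)
    (hcompP : G.CrossComplete (fun x => P x ∧ x ≠ p) (fun x => Q x ∨ x = p))
    (hcompQ : G.CrossComplete (fun x => Q x ∧ x ≠ q) (fun x => P x ∨ x = q)) (a : V) :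
    (G.lc a).CutInvariant P Q p q where
  crossComplete := h.crossComplete.lc hPQ a
  crossingOrNbhd_left := h.crossingOrNbhd_left.lc hPQ hp h.crossComplete h.nbhd_left a
  crossingOrNbhd_right :=
    h.crossingOrNbhd_right.lc hPQ.symm hq h.crossComplete.swap h.nbhd_right a
  isolated := h.isolated.lc hPQ a
  nbhd_left := h.nbhd_left.lc hPQ hp h.crossComplete hcompP h.crossingOrNbhd_left a
  nbhd_right :=
    h.nbhd_right.lc hPQ.symm hq h.crossComplete.swap hcompQ h.crossingOrNbhd_right a

end Cut

section Line

def LineCutInvariant (G : FGraph ℕ) : Prop :=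
  ∀ t : ℕ, G.CutInvariant (· ≤ t) (t < ·) t (t + 1)

lemma isCompl_le_lt (t : ℕ) : IsCompl (· ≤ t) (t < ·) :=
  Pi.isCompl_iff.2 fun _ => Prop.isCompl_iff.2 (by omega)

variable {G : FGraph ℕ}

lemma LineCutInvariant.crossComplete_below (h : G.LineCutInvariant) (t : ℕ) :
    G.CrossComplete (fun x => x ≤ t ∧ x ≠ t) (fun x => t < x ∨ x = t) := by
  cases t with
  | zero => rintro x - - - ⟨-, hx, -⟩; omega
  | succ t => exact (h t).crossComplete.mono (fun _ _ => by omega) (fun _ _ => by omega)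

lemma LineCutInvariant.crossComplete_above (h : G.LineCutInvariant) (t : ℕ) :
    G.CrossComplete (fun x => t < x ∧ x ≠ t + 1) (fun x => x ≤ t ∨ x = t + 1) :=
  (h (t + 1)).crossComplete.swap.mono (fun _ _ => by omega) (fun _ _ => by omega)

lemma LineCutInvariant.lc (h : G.LineCutInvariant) (a : ℕ) : (G.lc a).LineCutInvariant :=
  fun t => (h t).lc (isCompl_le_lt t) le_rfl t.lt_succ_self (h.crossComplete_below t)
    (h.crossComplete_above t) a

lemma LineCutInvariant.delete (h : G.LineCutInvariant) (v : ℕ) :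
    (G.delete v).LineCutInvariant :=
  fun t => (h t).delete (isCompl_le_lt t).disjoint v

lemma LineCutInvariant.of_isVertexMinor {H : FGraph ℕ} (hG : G.LineCutInvariant)
    (h : IsVertexMinor H G) : H.LineCutInvariant := by
  induction h with
  | refl => exact hG
  | tail _ hstep ih =>
    rcases hstep with ⟨a, rfl⟩ | ⟨v, rfl⟩
    exacts [ih.lc a, ih.delete v]

lemma lineGraph_crossAdj {n t x y : ℕ} :
    (lineGraph n).CrossAdj (· ≤ t) (t < ·) x y ↔ x = t ∧ y = t + 1 ∧ 1 ≤ t ∧ t + 1 ≤ n := by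
  simp only [CrossAdj, lineGraph, Finset.mem_Icc]
  omega

lemma lineGraph_crossAdj_swap {n t x y : ℕ} :
    (lineGraph n).CrossAdj (t < ·) (· ≤ t) x y ↔ x = t + 1 ∧ y = t ∧ 1 ≤ t ∧ t + 1 ≤ n := by
  simp only [CrossAdj, lineGraph, Finset.mem_Icc]
  omega

lemma lineCutInvariant_lineGraph (n : ℕ) : (lineGraph n).LineCutInvariant := by
  intro t
  constructor
  · intro x y x' y' hxy hx'y'
    rw [lineGraph_crossAdj] at hxy hx'y'
    simp only [lineGraph, Finset.mem_Icc]
    omega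
  · rintro ⟨x, y, hxy⟩ -
    exact Or.inl ⟨t + 1, lineGraph_crossAdj.2 ⟨rfl, rfl, (lineGraph_crossAdj.1 hxy).2.2⟩⟩
  · rintro ⟨x, y, hxy⟩ -
    exact Or.inl ⟨t, lineGraph_crossAdj_swap.2 ⟨rfl, rfl, (lineGraph_crossAdj_swap.1 hxy).2.2⟩⟩
  · intro hncr ht ht'
    simp only [lineGraph, Finset.mem_Icc] at ht ht'
    exact (hncr ⟨t, t + 1, lineGraph_crossAdj.2 ⟨rfl, rfl, by omega, by omega⟩⟩).elim
  · rintro - ⟨w, hw, y, hwy⟩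
    obtain rfl := (lineGraph_crossAdj.1 hwy).1
    exact ((lineGraph n).loopless _ hw).elim
  · rintro - ⟨w, hw, y, hwy⟩
    obtain rfl := (lineGraph_crossAdj_swap.1 hwy).1
    exact ((lineGraph n).loopless _ hw).elim

lemma not_lineCutInvariant_bell2 {a₁ a₂ b₂ : ℕ} (ha : a₁ < a₂) (hb : a₂ + 1 < b₂) :
    ¬ (bell2 a₁ a₂ (a₂ + 1) b₂).LineCutInvariant := by
  intro h
  have hncr : ¬ (bell2 a₁ a₂ (a₂ + 1) b₂).HasCrossEdge (· ≤ a₂) (a₂ < ·) := by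
    rintro ⟨x, y, ⟨-, hxy⟩, hx, hy⟩
    omega
  rcases (h a₂).isolated hncr (by simp [bell2]) (by simp [bell2]) with hN | hN
  · exact hN a₁ ⟨by omega, Or.inr (Or.inl ⟨rfl, rfl⟩)⟩
  · exact hN b₂ ⟨by omega, Or.inr (Or.inr (Or.inl ⟨rfl, rfl⟩))⟩

end Line

end FGraph

theorem bell2_not_vertexMinor_line_adjacent_general (n a1 a2 b1 b2 : ℕ)
    (h1 : a1 < a2) (h3 : b1 < b2)
    (hadj : b1 = a2 + 1) :
    ¬ IsVertexMinor (bell2 a1 a2 b1 b2) (lineGraph n) := by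
  subst hadj
  exact fun hvm => FGraph.not_lineCutInvariant_bell2 h1 h3
    ((FGraph.lineCutInvariant_lineGraph n).of_isVertexMinor hvm)

/-- two Bell pairs `{a1, a2}` and `{b1, b2}` with `a1 < a2 < b1 < b2`
and `a2`, `b1` adjacent in `L_n` cannot be extracted from the line graph `L_n`. -/
theorem bell2_not_vertexMinor_line_adjacent (n a1 a2 b1 b2 : ℕ) (hn : 4 ≤ n)
    (h0 : 1 ≤ a1) (h1 : a1 < a2) (h2 : a2 < b1) (h3 : b1 < b2) (h4 : b2 ≤ n)
    (hadj : b1 = a2 + 1) :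
    ¬ IsVertexMinor (bell2 a1 a2 b1 b2) (lineGraph n) :=
  bell2_not_vertexMinor_line_adjacent_general n a1 a2 b1 b2 h1 h3 hadj
end

section
/- Let n ≥ 4 and let L_n be the line graph on vertices {1, ..., n}, and let a_1, a_2, b_1, b_2 be four distinct vertices. The graph on vertex set {a_1, a_2, b_1, b_2} whose only edges are {a_1, a_2} and {b_1, b_2} (two Bell pairs) is a vertex-minor of L_n if and only if, after possibly swapping a_1 with a_2, swapping b_1 with b_2, and/or swapping the pair {a_1,a_2} with the pair {b_1,b_2}, one has a_1 < a_2 < b_1 < b_2 with a_2 and b_1 not adjacent in L_n (i.e., b_1 > a_2 + 1). -/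
variable {V : Type*}

/-!
Every initial segment `{1, …, m}` of `L_n` has cut-rank at most one, and cut-rank does not
increase under local complementation or vertex deletion. Two crossing edges across such a cut
force a third one, so the two Bell pairs cannot interleave. If they are `c1 < c2` and
`e1 = c2 + 1 < e2`, the vertices `c2` and `e1` stay connected along any sequence of operations
leading to the Bell pairs: local complementation preserves components, and a deletion that
separated them while keeping `c1 ~ c2` and `e1 ~ e2` would leave two components crossing the
same rank-one cut.

Conversely, deleting `c2 + 1` splits `L_n` into two paths, and any other vertex `v` is removed
by `τ_v` followed by deleting `v`, which joins the two neighbours of `v`; removing everything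
outside `{c1, c2, e1, e2}` in this way leaves the two Bell pairs.
-/

open Relation Finset

namespace FGraph

theorem ext_of_adj_iff {G H : FGraph V} (hv : G.verts = H.verts)
    (hadj : ∀ x y, G.Adj x y ↔ H.Adj x y) : G = H := by
  cases G; cases H
  obtain rfl : _ = _ := hv
  obtain rfl : _ = _ := funext fun x => funext fun y => propext (hadj x y)
  rfl

def Reachable (G : FGraph V) : V → V → Prop := ReflTransGen G.Adj

theorem Reachable.symm {G : FGraph V} {x y : V} (h : G.Reachable x y) : G.Reachable y x :=
  ReflTransGen.mono (fun a b hab => G.symm b a hab) _ _ (ReflTransGen.swap _ _ h)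

theorem Reachable.trans {G : FGraph V} {x y z : V} (h : G.Reachable x y) (h' : G.Reachable y z) :
    G.Reachable x z :=
  ReflTransGen.trans h h'

theorem Adj.reachable {G : FGraph V} {x y : V} (h : G.Adj x y) : G.Reachable x y :=
  ReflTransGen.single h

theorem lc_adj_left {G : FGraph V} {a x : V} : (G.lc a).Adj a x ↔ G.Adj a x := by
  simp only [lc]
  have := G.loopless a
  tauto

theorem reachable_lc_iff {G : FGraph V} {a x y : V} : (G.lc a).Reachable x y ↔ G.Reachable x y := by
  constructor
  · refine fun h => ReflTransGen.lift' id (fun b c hbc => ?_) _ _ h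
    rcases hbc with ⟨hbc, -⟩ | ⟨⟨-, hab, hac⟩, -⟩
    · exact hbc.reachable
    · exact (G.symm _ _ hab).reachable.trans hac.reachable
  · refine fun h => ReflTransGen.lift' id (fun b c hbc => ?_) _ _ h
    by_cases hN : b ≠ c ∧ G.Adj a b ∧ G.Adj a c
    · exact ((G.lc a).symm _ _ (lc_adj_left.2 hN.2.1)).reachable.trans
        (lc_adj_left.2 hN.2.2).reachable
    · exact Adj.reachable (G := G.lc a) (Or.inl ⟨hbc, hN⟩)

section Delete

variable [DecidableEq V]

theorem Reachable.of_delete {G : FGraph V} {v x y : V} (h : (G.delete v).Reachable x y) :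
    G.Reachable x y :=
  ReflTransGen.mono (fun _ _ hbc => hbc.1) _ _ h

theorem Reachable.ne_of_delete {G : FGraph V} {v x y : V} (h : (G.delete v).Reachable x y)
    (hxy : x ≠ y) : y ≠ v := by
  cases h with
  | refl => exact absurd rfl hxy
  | tail _ h => exact h.2.2

theorem Reachable.of_reflTransGen_step {G H : FGraph V} (hGH : ReflTransGen Step G H) {x y : V}
    (h : H.Reachable x y) : G.Reachable x y := by
  induction hGH with
  | refl => exact h
  | tail _ hstep ih =>
    rcases hstep with ⟨a, rfl⟩ | ⟨v, rfl⟩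
    · exact ih (reachable_lc_iff.1 h)
    · exact ih h.of_delete

theorem Reachable.delete_or_exists_adj {G : FGraph V} {v x y : V} (h : G.Reachable x y)
    (hy : y ≠ v) :
    (G.delete v).Reachable x y ∨ ∃ w, G.Adj v w ∧ w ≠ v ∧ (G.delete v).Reachable w y := by
  induction h with
  | refl => exact Or.inl .refl
  | @tail b c _ hbc ih =>
    by_cases hb : b = v
    · exact Or.inr ⟨c, hb ▸ hbc, hy, .refl⟩
    · rcases ih hb with h | ⟨w, hvw, hw, h⟩
      · exact Or.inl (h.tail ⟨hbc, hb, hy⟩)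
      · exact Or.inr ⟨w, hvw, hw, h.tail ⟨hbc, hb, hy⟩⟩

end Delete

theorem Reachable.exists_adj_of_cross {G : FGraph V} {P : V → Prop} {x y : V}
    (h : G.Reachable x y) (hx : P x) (hy : ¬ P y) :
    ∃ p q, G.Reachable x p ∧ G.Adj p q ∧ P p ∧ ¬ P q := by
  induction h with
  | refl => exact absurd hx hy
  | @tail b c hxb hbc ih =>
    by_cases hb : P b
    · exact ⟨b, c, hxb, hbc, hb, hy⟩
    · exact ih hb

/-- Cut-rank at most one over `GF(2)` across the cut `(P, ¬P)`: the edges crossing it are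
exactly those of a complete bipartite graph between `A ⊆ P` and `B ⊆ ¬P`. -/
def CutRankLeOne (G : FGraph V) (P : V → Prop) : Prop :=
  ∃ A B : V → Prop, ∀ x y, P x → ¬ P y → (G.Adj x y ↔ A x ∧ B y)

namespace CutRankLeOne

variable {G : FGraph V} {P : V → Prop}

theorem adj {x y x' y' : V} (hG : G.CutRankLeOne P) (hx : P x) (hy : ¬ P y)
    (hx' : P x') (hy' : ¬ P y') (hxy : G.Adj x y) (hxy' : G.Adj x' y') : G.Adj x y' := by
  obtain ⟨A, B, hAB⟩ := hG
  exact (hAB x y' hx hy').2 ⟨((hAB x y hx hy).1 hxy).1, ((hAB x' y' hx' hy').1 hxy').2⟩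

theorem lc (hG : G.CutRankLeOne P) (a : V) : (G.lc a).CutRankLeOne P := by
  obtain ⟨A, B, hAB⟩ := hG
  have hne : ∀ x y, P x → ¬ P y → x ≠ y := fun x y hx hy h => hy (h ▸ hx)
  by_cases ha : P a
  · refine ⟨fun x => (A x ↔ ¬ (A a ∧ G.Adj a x)), B, fun x y hx hy => ?_⟩
    simp only [FGraph.lc, hAB x y hx hy, hAB a y ha hy, ne_eq, hne x y hx hy, not_false_eq_true,
      true_and]
    tauto
  · refine ⟨A, fun y => (B y ↔ ¬ (B a ∧ G.Adj a y)), fun x y hx hy => ?_⟩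
    have hax : G.Adj a x ↔ A x ∧ B a := by
      rw [← hAB x a hx ha]
      exact ⟨G.symm _ _, G.symm _ _⟩
    simp only [FGraph.lc, hAB x y hx hy, hax, ne_eq, hne x y hx hy, not_false_eq_true,
      true_and]
    tauto

theorem delete [DecidableEq V] (hG : G.CutRankLeOne P) (v : V) :
    (G.delete v).CutRankLeOne P := by
  obtain ⟨A, B, hAB⟩ := hG
  refine ⟨fun x => A x ∧ x ≠ v, fun y => B y ∧ y ≠ v, fun x y hx hy => ?_⟩
  simp only [FGraph.delete, hAB x y hx hy]
  tauto

theorem of_reflTransGen_step [DecidableEq V] {H : FGraph V} (hGH : ReflTransGen Step G H)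
    (hG : G.CutRankLeOne P) : H.CutRankLeOne P := by
  induction hGH with
  | refl => exact hG
  | tail _ hstep ih =>
    rcases hstep with ⟨a, rfl⟩ | ⟨v, rfl⟩
    · exact ih.lc a
    · exact ih.delete v

theorem reachable_of_cross {x y x' y' : V} (hG : G.CutRankLeOne P) (h : G.Reachable x y)
    (hx : P x) (hy : ¬ P y) (h' : G.Reachable x' y') (hx' : P x') (hy' : ¬ P y') :
    G.Reachable x x' := by
  obtain ⟨p, q, hxp, hpq, hp, hq⟩ := h.exists_adj_of_cross hx hy
  obtain ⟨p', q', hxp', hpq', hp', hq'⟩ := h'.exists_adj_of_cross hx' hy'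
  exact (hxp.trans (hG.adj hp hq hp' hq' hpq hpq').reachable).trans
    ((G.symm _ _ hpq').reachable.trans hxp'.symm)

end CutRankLeOne

section LinearOrder

variable [LinearOrder V]

/-- The order of `V` is a linear layout of `G` of rank-width at most one. -/
def InitialCutsRankLeOne (G : FGraph V) : Prop := ∀ m, G.CutRankLeOne (· ≤ m)

namespace InitialCutsRankLeOne

variable {G : FGraph V} {c1 c2 e1 e2 : V}

theorem of_reflTransGen_step {H : FGraph V} (hGH : ReflTransGen Step G H)
    (hG : G.InitialCutsRankLeOne) : H.InitialCutsRankLeOne :=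
  fun m => (hG m).of_reflTransGen_step hGH

theorem le_of_reachable_of_not_reachable (hG : G.InitialCutsRankLeOne) (h1 : c1 < c2)
    (h2 : c2 ⋖ e1) (h3 : e1 < e2) (hc : G.Reachable c1 c2) (he : G.Reachable e1 e2)
    (hsep : ¬ G.Reachable c2 e1) :
    (∀ z, G.Reachable c2 z → z ≤ c2) ∧ ∀ z, G.Reachable e1 z → e1 ≤ z := by
  constructor
  · intro z hz
    by_contra! hz'
    have hz'' : e1 < z := (h2.ge_of_gt hz').lt_of_ne (by rintro rfl; exact hsep hz)
    exact hsep ((hG e1).reachable_of_cross hz h2.lt.le hz''.not_ge he le_rfl h3.not_ge)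
  · intro z hz
    by_contra! hz'
    have hz'' : z < c2 := (h2.le_of_lt hz').lt_of_ne (by rintro rfl; exact hsep hz.symm)
    have hc1z := (hG (max c1 z)).reachable_of_cross hc (le_max_left c1 z) (max_lt h1 hz'').not_ge
      hz.symm (le_max_right c1 z) (max_lt (h1.trans h2.lt) (hz''.trans h2.lt)).not_ge
    exact hsep ((hc.symm.trans hc1z).trans hz.symm)

theorem reachable_delete (hG : G.InitialCutsRankLeOne) {v : V} (h1 : c1 < c2) (h2 : c2 ⋖ e1)
    (h3 : e1 < e2) (hc : (G.delete v).Reachable c1 c2) (he : (G.delete v).Reachable e1 e2)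
    (h : G.Reachable c2 e1) : (G.delete v).Reachable c2 e1 := by
  by_contra hsep
  obtain ⟨below, above⟩ :=
    le_of_reachable_of_not_reachable (fun m => (hG m).delete v) h1 h2 h3 hc he hsep
  have hc2v : c2 ≠ v := hc.ne_of_delete h1.ne
  have he1v : e1 ≠ v := he.symm.ne_of_delete h3.ne'
  obtain ⟨β, hvβ, hβ, hβe1⟩ := (h.delete_or_exists_adj he1v).resolve_left hsep
  obtain ⟨α, hvα, hα, hαc2⟩ :=
    (h.symm.delete_or_exists_adj hc2v).resolve_left fun h => hsep h.symm
  have hc2β : c2 < β := h2.lt.trans_le (above β hβe1.symm)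
  rcases hc2v.symm.lt_or_gt with hv | hv
  · -- the edge `v β` and the path `c1 ⋯ c2` both cross the cut at `max c1 v`
    obtain ⟨p, q, hc1p, hpq, hp, hq⟩ :=
      hc.exists_adj_of_cross (P := (· ≤ max c1 v)) (le_max_left c1 v) (max_lt h1 hv).not_ge
    have hpβ : (G.delete v).Adj p β :=
      ⟨(hG _).adj hp hq (le_max_right c1 v) (max_lt (h1.trans hc2β) (hv.trans hc2β)).not_ge
        hpq.1 hvβ, hpq.2.1, hβ⟩
    exact hsep (hc.symm.trans (hc1p.trans (hpβ.reachable.trans hβe1)))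
  · -- the edge `α v` and the path `e1 ⋯ e2` both cross the cut at `e1`
    have hv' : e1 < v := (h2.ge_of_gt hv).lt_of_ne he1v
    obtain ⟨p, q, he1p, hpq, hp, hq⟩ := he.exists_adj_of_cross (P := (· ≤ e1)) le_rfl h3.not_ge
    have hαq : (G.delete v).Adj α q :=
      ⟨(hG e1).adj ((below α hαc2.symm).trans h2.lt.le) hv'.not_ge hp hq (G.symm _ _ hvα) hpq.1,
        hα, hpq.2.2⟩
    exact hsep (hαc2.symm.trans (hαq.reachable.trans
      (((G.delete v).symm _ _ hpq).reachable.trans he1p.symm)))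

theorem reachable_of_reflTransGen_step {H : FGraph V} (hGH : ReflTransGen Step G H)
    (hG : G.InitialCutsRankLeOne) (h1 : c1 < c2) (h2 : c2 ⋖ e1) (h3 : e1 < e2)
    (hc : H.Reachable c1 c2) (he : H.Reachable e1 e2) (h : G.Reachable c2 e1) :
    H.Reachable c2 e1 := by
  induction hGH using ReflTransGen.head_induction_on with
  | refl => exact h
  | head hstep hGH ih =>
    rcases hstep with ⟨a, rfl⟩ | ⟨v, rfl⟩
    · exact ih (fun m => (hG m).lc a) (reachable_lc_iff.2 h)
    · exact ih (fun m => (hG m).delete v) (hG.reachable_delete h1 h2 h3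
        (.of_reflTransGen_step hGH hc) (.of_reflTransGen_step hGH he) h)

end InitialCutsRankLeOne

/-- The path through the points of `S` in increasing order, cut wherever a point of `W` lies
strictly in between; for `S ⊆ W` the points of `W \ S` are the gaps of a disjoint union of paths. -/
def pathAvoiding (S W : Finset V) : FGraph V where
  verts := S
  Adj x y := x ∈ S ∧ y ∈ S ∧ x ≠ y ∧ ∀ z ∈ W, z ∉ Set.uIoo x y
  symm x y := by
    rintro ⟨hx, hy, hxy, h⟩
    exact ⟨hy, hx, hxy.symm, Set.uIoo_comm x y ▸ h⟩
  loopless x h := h.2.2.1 rfl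
  mem_of_adj _ _ h := ⟨h.1, h.2.1⟩

theorem pathAvoiding_delete (S W : Finset V) (v : V) :
    (pathAvoiding S W).delete v = pathAvoiding (S.erase v) W :=
  ext_of_adj_iff rfl fun x y => by
    simp only [delete, pathAvoiding, mem_erase]
    tauto

/-- Complementing at `v` joins its two neighbours, so `v` can be removed without cutting the
path. -/
theorem pathAvoiding_lc_delete {S W : Finset V} (hSW : S ⊆ W) {v : V} (hv : v ∈ S) :
    ((pathAvoiding S W).lc v).delete v = pathAvoiding (S.erase v) (W.erase v) := by
  refine ext_of_adj_iff rfl fun x y => ?_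
  simp only [delete, lc, pathAvoiding, mem_erase]
  by_cases hxy : x ∈ S ∧ y ∈ S ∧ x ≠ y ∧ x ≠ v ∧ y ≠ v
  swap
  · tauto
  obtain ⟨hx, hy, hxy, hxv, hyv⟩ := hxy
  by_cases hvxy : v ∈ Set.uIoo x y
  · have hsplit : (∀ z, z ≠ v ∧ z ∈ W → z ∉ Set.uIoo x y) ↔
        (∀ z ∈ W, z ∉ Set.uIoo v x) ∧ (∀ z ∈ W, z ∉ Set.uIoo v y) := by
      simp only [Set.uIoo, Set.mem_Ioo, inf_lt_iff, lt_sup_iff] at hvxy ⊢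
      grind
    have hcut : ¬ ∀ z ∈ W, z ∉ Set.uIoo x y := fun h => h v (hSW hv) hvxy
    grind
  · have hsame : (∀ z, z ≠ v ∧ z ∈ W → z ∉ Set.uIoo x y) ↔ ∀ z ∈ W, z ∉ Set.uIoo x y := by
      grind
    have hside : x ∈ Set.uIoo v y ∨ y ∈ Set.uIoo v x := by
      simp only [Set.uIoo, Set.mem_Ioo, inf_lt_iff, lt_sup_iff] at hvxy ⊢
      grind
    have hnot : ¬ ((∀ z ∈ W, z ∉ Set.uIoo v x) ∧ ∀ z ∈ W, z ∉ Set.uIoo v y) := by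
      rintro ⟨h1, h2⟩
      rcases hside with h | h
      · exact h2 x (hSW hx) h
      · exact h1 y (hSW hy) h
    grind

theorem reflTransGen_pathAvoiding_sdiff {S W R : Finset V} (hSW : S ⊆ W) (hR : R ⊆ S) :
    ReflTransGen Step (pathAvoiding S W) (pathAvoiding (S \ R) (W \ R)) := by
  induction R using Finset.induction_on with
  | empty => simpa using .refl
  | insert a R haR ih =>
    have haS := hR (mem_insert_self a R)
    have hlc : Step (pathAvoiding (S \ R) (W \ R)) ((pathAvoiding (S \ R) (W \ R)).lc a) :=
      Or.inl ⟨a, rfl⟩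
    have hdel : Step ((pathAvoiding (S \ R) (W \ R)).lc a)
        (pathAvoiding (S \ insert a R) (W \ insert a R)) := by
      refine Or.inr ⟨a, ?_⟩
      rw [sdiff_insert, sdiff_insert, pathAvoiding_lc_delete (sdiff_subset_sdiff hSW le_rfl)
        (mem_sdiff.2 ⟨haS, haR⟩)]
    exact ((ih ((subset_insert a R).trans hR)).tail hlc).tail hdel

end LinearOrder

end FGraph

open FGraph

section Bell

variable [DecidableEq V]

theorem bell2_eq_of_pairs {a1 a2 b1 b2 c1 c2 e1 e2 : V}
    (ha : ({c1, c2} : Finset V) = {a1, a2}) (hb : ({e1, e2} : Finset V) = {b1, b2}) :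
    bell2 c1 c2 e1 e2 = bell2 a1 a2 b1 b2 := by
  rw [← coe_inj, coe_pair, coe_pair, Set.pair_eq_pair_iff] at ha hb
  rcases ha with ⟨rfl, rfl⟩ | ⟨rfl, rfl⟩ <;> rcases hb with ⟨rfl, rfl⟩ | ⟨rfl, rfl⟩ <;>
    refine ext_of_adj_iff ?_ fun x y => ?_ <;>
    simp only [bell2, Finset.ext_iff, mem_insert, mem_singleton] <;> tauto

theorem bell2_swap_pairs (a1 a2 b1 b2 : V) : bell2 b1 b2 a1 a2 = bell2 a1 a2 b1 b2 := by
  refine ext_of_adj_iff ?_ fun x y => ?_ <;>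
    simp only [bell2, Finset.ext_iff, mem_insert, mem_singleton] <;> tauto

theorem bell2_adj_left {a1 a2 b1 b2 : V} (h : a1 ≠ a2) : (bell2 a1 a2 b1 b2).Adj a1 a2 :=
  ⟨h, Or.inl ⟨rfl, rfl⟩⟩

theorem bell2_adj_right {a1 a2 b1 b2 : V} (h : b1 ≠ b2) : (bell2 a1 a2 b1 b2).Adj b1 b2 :=
  ⟨h, Or.inr (Or.inr (Or.inl ⟨rfl, rfl⟩))⟩

theorem bell2_not_reachable {a1 a2 b1 b2 : V} (h1 : a1 ≠ b1) (h2 : a1 ≠ b2) (h3 : a2 ≠ b1)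
    (h4 : a2 ≠ b2) : ¬ (bell2 a1 a2 b1 b2).Reachable a2 b1 := by
  suffices ∀ z, (bell2 a1 a2 b1 b2).Reachable a2 z → z = a1 ∨ z = a2 from
    fun h => by rcases this b1 h with h | h <;> simp_all
  intro z h
  induction h with
  | refl => exact Or.inr rfl
  | tail _ hbc ih =>
    obtain ⟨-, hbc⟩ := hbc
    grind

end Bell

section OrderedBell

variable [LinearOrder V]

theorem bell2_eq_pathAvoiding {c1 c2 g e1 e2 : V} (h1 : c1 < c2) (h2 : c2 < g)
    (h3 : g < e1) (h4 : e1 < e2) :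
    bell2 c1 c2 e1 e2 = pathAvoiding {c1, c2, e1, e2} {c1, c2, g, e1, e2} := by
  refine ext_of_adj_iff rfl fun x y => ?_
  simp only [bell2, pathAvoiding, mem_insert, mem_singleton, forall_eq_or_imp, forall_eq,
    Set.uIoo, Set.mem_Ioo, inf_lt_iff, lt_sup_iff]
  grind (splits := 40)

theorem bell2_lt_or_lt_of_initialCutsRankLeOne {c1 c2 e1 e2 : V}
    (h : (bell2 c1 c2 e1 e2).InitialCutsRankLeOne) (hc : c1 < c2) (he : e1 < e2)
    (d1 : c1 ≠ e1) (d2 : c1 ≠ e2) (d3 : c2 ≠ e1) (d4 : c2 ≠ e2) : c2 < e1 ∨ e2 < c1 := by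
  by_contra! hcross
  have hc2 : max c1 e1 < c2 := max_lt hc (hcross.1.lt_of_ne d3.symm)
  have he2 : max c1 e1 < e2 := max_lt (hcross.2.lt_of_ne d2) he
  have := (h (max c1 e1)).adj (le_max_left c1 e1) hc2.not_ge (le_max_right c1 e1) he2.not_ge
    (bell2_adj_left hc.ne) (bell2_adj_right he.ne)
  simp only [bell2] at this
  grind

end OrderedBell

section Line

theorem lineGraph_eq_pathAvoiding (n : ℕ) : lineGraph n = pathAvoiding (Icc 1 n) (Icc 1 n) := by
  refine ext_of_adj_iff rfl fun x y => ⟨fun ⟨hx, hy, h⟩ => ⟨hx, hy, by omega, fun z _ hz => ?_⟩,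
    fun ⟨hx, hy, hxy, h⟩ => ⟨hx, hy, ?_⟩⟩
  · simp only [Set.uIoo, Set.mem_Ioo] at hz
    omega
  · by_contra hne
    refine h (min x y + 1) ?_ ?_
    · simp only [mem_Icc] at hx hy ⊢
      omega
    · simp only [Set.uIoo, Set.mem_Ioo]
      omega

theorem lineGraph_initialCutsRankLeOne (n : ℕ) : (lineGraph n).InitialCutsRankLeOne :=
  fun m => ⟨fun x => x = m ∧ x ∈ Icc 1 n, fun y => y = m + 1 ∧ y ∈ Icc 1 n, fun x y hx hy => by
    simp only [lineGraph, mem_Icc] at hy ⊢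
    omega⟩

theorem lineGraph_reachable {n x y : ℕ} (hx : x ∈ Icc 1 n) (hy : y ∈ Icc 1 n) :
    (lineGraph n).Reachable x y := by
  wlog hxy : x ≤ y generalizing x y
  · exact (this hy hx (le_of_not_ge hxy)).symm
  induction y, hxy using Nat.le_induction with
  | base => exact .refl
  | succ y hxy ih =>
    simp only [mem_Icc] at hx hy ih
    exact (ih (by omega)).tail ⟨by simp only [mem_Icc]; omega, by simp only [mem_Icc]; omega,
      Or.inl rfl⟩

end Line

section LineBell

theorem isVertexMinor_bell2_lineGraph {n c1 c2 e1 e2 : ℕ} (hc1 : 1 ≤ c1) (h1 : c1 < c2)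
    (h2 : c2 + 1 < e1) (h3 : e1 < e2) (he2 : e2 ≤ n) :
    IsVertexMinor (bell2 c1 c2 e1 e2) (lineGraph n) := by
  set R := Icc 1 n \ {c1, c2, c2 + 1, e1, e2}
  have hR : R ⊆ (Icc 1 n).erase (c2 + 1) := fun x hx => by
    simp only [R, mem_sdiff, mem_erase, mem_Icc, mem_insert, mem_singleton] at hx ⊢
    omega
  have hS : (Icc 1 n).erase (c2 + 1) \ R = {c1, c2, e1, e2} := by
    ext; simp only [R, mem_sdiff, mem_erase, mem_Icc, mem_insert, mem_singleton]; omega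
  have hW : Icc 1 n \ R = {c1, c2, c2 + 1, e1, e2} := by
    ext; simp only [R, mem_sdiff, mem_Icc, mem_insert, mem_singleton]; omega
  have hpath := reflTransGen_pathAvoiding_sdiff (erase_subset (c2 + 1) (Icc 1 n)) hR
  rw [hS, hW, ← bell2_eq_pathAvoiding h1 c2.lt_add_one h2 h3, ← pathAvoiding_delete] at hpath
  rw [lineGraph_eq_pathAvoiding]
  exact ReflTransGen.head (Or.inr ⟨c2 + 1, rfl⟩) hpath

theorem not_isVertexMinor_bell2_succ_lineGraph {n c1 c2 e2 : ℕ} (hc1 : 1 ≤ c1) (h1 : c1 < c2)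
    (h2 : c2 + 1 < e2) (he2 : e2 ≤ n) : ¬ IsVertexMinor (bell2 c1 c2 (c2 + 1) e2) (lineGraph n) :=
  fun h => bell2_not_reachable (by omega) (by omega) (by omega) (by omega)
    ((lineGraph_initialCutsRankLeOne n).reachable_of_reflTransGen_step h h1
      (Order.covBy_add_one c2) h2 (bell2_adj_left h1.ne).reachable
      (bell2_adj_right h2.ne).reachable
      (lineGraph_reachable (mem_Icc.2 ⟨by omega, by omega⟩) (mem_Icc.2 ⟨by omega, by omega⟩)))

theorem add_one_lt_or_of_isVertexMinor_bell2_lineGraph {n c1 c2 e1 e2 : ℕ} (hc : c1 < c2)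
    (he : e1 < e2) (d1 : c1 ≠ e1) (d2 : c1 ≠ e2) (d3 : c2 ≠ e1) (d4 : c2 ≠ e2) (hc1 : 1 ≤ c1)
    (he1 : 1 ≤ e1) (hc2 : c2 ≤ n) (he2 : e2 ≤ n)
    (h : IsVertexMinor (bell2 c1 c2 e1 e2) (lineGraph n)) : c2 + 1 < e1 ∨ e2 + 1 < c1 := by
  have hcuts := (lineGraph_initialCutsRankLeOne n).of_reflTransGen_step h
  rcases bell2_lt_or_lt_of_initialCutsRankLeOne hcuts hc he d1 d2 d3 d4 with hlt | hlt
  · refine Or.inl (lt_of_le_of_ne hlt fun heq => ?_)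
    subst heq
    exact not_isVertexMinor_bell2_succ_lineGraph hc1 hc he he2 h
  · refine Or.inr (lt_of_le_of_ne hlt fun heq => ?_)
    subst heq
    exact not_isVertexMinor_bell2_succ_lineGraph he1 he hc hc2 (by rwa [← bell2_swap_pairs] at h)

end LineBell

theorem bell2_vertexMinor_line_iff_general (n a1 a2 b1 b2 : ℕ)
    (ha1 : a1 ∈ Finset.Icc 1 n) (ha2 : a2 ∈ Finset.Icc 1 n)
    (hb1 : b1 ∈ Finset.Icc 1 n) (hb2 : b2 ∈ Finset.Icc 1 n)
    (d1 : a1 ≠ a2) (d2 : a1 ≠ b1) (d3 : a1 ≠ b2)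
    (d4 : a2 ≠ b1) (d5 : a2 ≠ b2) (d6 : b1 ≠ b2) :
    IsVertexMinor (bell2 a1 a2 b1 b2) (lineGraph n) ↔
      ∃ c1 c2 e1 e2 : ℕ,
        ((({c1, c2} : Finset ℕ) = {a1, a2} ∧ ({e1, e2} : Finset ℕ) = {b1, b2}) ∨
         (({c1, c2} : Finset ℕ) = {b1, b2} ∧ ({e1, e2} : Finset ℕ) = {a1, a2})) ∧
        c1 < c2 ∧ c2 + 1 < e1 ∧ e1 < e2 := by
  have hA : ({min a1 a2, max a1 a2} : Finset ℕ) = {a1, a2} := by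
    rcases le_total a1 a2 with h | h <;> simp [h, pair_comm]
  have hB : ({min b1 b2, max b1 b2} : Finset ℕ) = {b1, b2} := by
    rcases le_total b1 b2 with h | h <;> simp [h, pair_comm]
  simp only [mem_Icc] at ha1 ha2 hb1 hb2
  constructor
  · intro h
    rw [← bell2_eq_of_pairs hA hB] at h
    rcases add_one_lt_or_of_isVertexMinor_bell2_lineGraph (min_lt_max.2 d1) (min_lt_max.2 d6)
      (by omega) (by omega) (by omega) (by omega) (by omega) (by omega) (by omega) (by omega) h
      with hgap | hgap
    · exact ⟨_, _, _, _, Or.inl ⟨hA, hB⟩, min_lt_max.2 d1, hgap, min_lt_max.2 d6⟩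
    · exact ⟨_, _, _, _, Or.inr ⟨hB, hA⟩, min_lt_max.2 d6, hgap, min_lt_max.2 d1⟩
  · rintro ⟨c1, c2, e1, e2, hpairs, h1, h2, h3⟩
    have hbell : bell2 c1 c2 e1 e2 = bell2 a1 a2 b1 b2 := by
      rcases hpairs with ⟨hA, hB⟩ | ⟨hA, hB⟩
      · exact bell2_eq_of_pairs hA hB
      · exact (bell2_eq_of_pairs hA hB).trans (bell2_swap_pairs a1 a2 b1 b2)
    have hc1 : c1 ∈ (bell2 a1 a2 b1 b2).verts := hbell ▸ mem_insert_self c1 _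
    have he2 : e2 ∈ (bell2 a1 a2 b1 b2).verts := hbell ▸ by simp [bell2]
    simp only [bell2, mem_insert, mem_singleton] at hc1 he2
    rw [← hbell]
    exact isVertexMinor_bell2_lineGraph (by omega) h1 h2 h3 (by omega)

/-- complete solution of the Bell vertex-minor problem on line graphs. -/
theorem bell2_vertexMinor_line_iff (n a1 a2 b1 b2 : ℕ) (hn : 4 ≤ n)
    (ha1 : a1 ∈ Finset.Icc 1 n) (ha2 : a2 ∈ Finset.Icc 1 n)
    (hb1 : b1 ∈ Finset.Icc 1 n) (hb2 : b2 ∈ Finset.Icc 1 n)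
    (d1 : a1 ≠ a2) (d2 : a1 ≠ b1) (d3 : a1 ≠ b2)
    (d4 : a2 ≠ b1) (d5 : a2 ≠ b2) (d6 : b1 ≠ b2) :
    IsVertexMinor (bell2 a1 a2 b1 b2) (lineGraph n) ↔
      ∃ c1 c2 e1 e2 : ℕ,
        ((({c1, c2} : Finset ℕ) = {a1, a2} ∧ ({e1, e2} : Finset ℕ) = {b1, b2}) ∨
         (({c1, c2} : Finset ℕ) = {b1, b2} ∧ ({e1, e2} : Finset ℕ) = {a1, a2})) ∧
        c1 < c2 ∧ c2 + 1 < e1 ∧ e1 < e2 :=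
  bell2_vertexMinor_line_iff_general n a1 a2 b1 b2 ha1 ha2 hb1 hb2 d1 d2 d3 d4 d5 d6
end
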